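/- Let G be a graph obtained from K_n (n ≥ 3) by subdividing every edge exactly k times, and let r = (n − 1)(k + 1) − ⌊(k+1)/2⌋. For each connected vertex set X of G with |X| ≤ r, all branch vertices (vertices of degree n − 1) not in X lie in a single component C(X) of G − X; moreover, the collection of all such components C(X), over all connected X with |X| ≤ r, is a bramble of G whose connected order exceeds r. -/

import Mathlib

open SimpleGraph

universe u

/-- `x` and `y` are joined by a walk in `G` all of whose vertices lie in `S`. -/
def ConnIn {V : Type u} (G : SimpleGraph V) (S : Set V) (x y : V) : Prop :=
  ∃ p : G.Walk x y, ∀ v ∈ p.support, v ∈ S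

/-- `S` is a (nonempty) connected vertex set of `G`, i.e. `G[S]` is connected. -/
def IsConnSet {V : Type u} (G : SimpleGraph V) (S : Set V) : Prop :=
  S.Nonempty ∧ ∀ x ∈ S, ∀ y ∈ S, ConnIn G S x y

/-- A tree-decomposition of `G` over the tree `T`. -/
structure TreeDecomp {V ι : Type u} (G : SimpleGraph V) (T : SimpleGraph ι) where
  isTree : T.IsTree
  bag : ι → Set V
  exists_bag : ∀ v : V, ∃ t, v ∈ bag t
  exists_bag_adj : ∀ ⦃u v : V⦄, G.Adj u v → ∃ t, u ∈ bag t ∧ v ∈ bag t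
  bag_sep : ∀ ⦃t₁ t₃ : ι⦄ (p : T.Walk t₁ t₃), p.IsPath → ∀ t₂ ∈ p.support,
      bag t₁ ∩ bag t₃ ⊆ bag t₂

/-- The union of the bags `B u` over `u ∈ A`. -/
def unionBags {V ι : Type u} (B : ι → Set V) (A : Set ι) : Set V := ⋃ u ∈ A, B u

/-- `s` is a descendant of `t` in the tree `T` rooted at `r`:
`t` lies on the (unique) `r`–`s` path. -/
def Desc {ι : Type u} (T : SimpleGraph ι) (r t s : ι) : Prop :=
  ∃ p : T.Walk r s, p.IsPath ∧ t ∈ p.support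

/-- The set of descendants of `t` (the subtree `T_t`). -/
def descSet {ι : Type u} (T : SimpleGraph ι) (r t : ι) : Set ι := {s | Desc T r t s}

/-- `s` is a child of `t` in the tree `T` rooted at `r`. -/
def IsChild {ι : Type u} (T : SimpleGraph ι) (r t s : ι) : Prop :=
  T.Adj t s ∧ Desc T r t s

/-- The vertex set of the component of `t₁` in `T` minus the edge `t₁t₂`. -/
def Side {ι : Type u} (T : SimpleGraph ι) (t₁ t₂ : ι) : Set ι :=
  {u | ∃ p : T.Walk u t₁, p.IsPath ∧ t₂ ∉ p.support}

/-- The family of bags `B` is stable: for every tree edge `t₁t₂`, both sides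
induce connected subgraphs of `G`. -/
def StableBags {V ι : Type u} (G : SimpleGraph V) (T : SimpleGraph ι) (B : ι → Set V) : Prop :=
  ∀ ⦃t₁ t₂ : ι⦄, T.Adj t₁ t₂ → IsConnSet G (unionBags B (Side T t₁ t₂))

def TreeDecomp.Stable {V ι : Type u} {G : SimpleGraph V} {T : SimpleGraph ι}
    (td : TreeDecomp G T) : Prop :=
  StableBags G T td.bag

/-- `P` is a `t`-admissible path (w.r.t. the root `r` and bags `B`): a shortest
path lying in `V_{T_t}` joining two distinct components of `G[B t]`. -/
structure IsAdmissible {V ι : Type u} (G : SimpleGraph V) (T : SimpleGraph ι)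
    (B : ι → Set V) (r t : ι) {x y : V} (P : G.Walk x y) : Prop where
  isPath : P.IsPath
  support_sub : ∀ v ∈ P.support, v ∈ unionBags B (descSet T r t)
  fst_mem : x ∈ B t
  snd_mem : y ∈ B t
  not_conn : ¬ ConnIn G (B t) x y
  minimal : ∀ ⦃x' y' : V⦄ (Q : G.Walk x' y'), Q.IsPath →
      (∀ v ∈ Q.support, v ∈ unionBags B (descSet T r t)) →
      x' ∈ B t → y' ∈ B t → ¬ ConnIn G (B t) x' y' → P.length ≤ Q.length

/-- The updated bags obtained by adding the path `P` as in `(*)`: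
`W_u = V_u ∪ (V(P) ∩ V_{T_u})` for descendants `u` of `t`, and `W_u = V_u` otherwise. -/
def updatedBag {V ι : Type u} (T : SimpleGraph ι) (B : ι → Set V) (r t : ι)
    {G : SimpleGraph V} {x y : V} (P : G.Walk x y) (u : ι) : Set V :=
  B u ∪ {v | Desc T r t u ∧ v ∈ P.support ∧ v ∈ unionBags B (descSet T r u)}

/-- The tree-width of `G`: the least `k` such that `G` has a tree-decomposition
all of whose bags have at most `k + 1` vertices. -/
noncomputable def treewidth {V : Type u} (G : SimpleGraph V) : ℕ :=
  sInf {k | ∃ (ι : Type u) (T : SimpleGraph ι) (td : TreeDecomp G T),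
    ∀ t, (td.bag t).ncard ≤ k + 1}

/-- A tree-decomposition is connected if every bag is a connected vertex set. -/
def TreeDecomp.IsConn {V ι : Type u} {G : SimpleGraph V} {T : SimpleGraph ι}
    (td : TreeDecomp G T) : Prop :=
  ∀ t, IsConnSet G (td.bag t)

/-- The connected tree-width of `G`. -/
noncomputable def ctw {V : Type u} (G : SimpleGraph V) : ℕ :=
  sInf {k | ∃ (ι : Type u) (T : SimpleGraph ι) (td : TreeDecomp G T),
    td.IsConn ∧ ∀ t, (td.bag t).ncard ≤ k + 1}

/-- The weak connected tree-width of `G`: the least `k` such that `G` has a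
tree-decomposition each of whose bags is contained in a connected set of at
most `k + 1` vertices. -/
noncomputable def wctw {V : Type u} (G : SimpleGraph V) : ℕ :=
  sInf {k | ∃ (ι : Type u) (T : SimpleGraph ι) (td : TreeDecomp G T),
    ∀ t, ∃ X, td.bag t ⊆ X ∧ IsConnSet G X ∧ X.ncard ≤ k + 1}

/-- The characteristic vector over GF(2) of the edge set of a walk. -/
noncomputable def walkChar {V : Type u} {G : SimpleGraph V} {x y : V}
    (p : G.Walk x y) : Sym2 V → ZMod 2 :=
  fun e => by classical exact if e ∈ p.edges then 1 else 0

/-- The characteristic vectors of the cycles of `G` of length at most `ℓ`. -/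
def cycleChars {V : Type u} (G : SimpleGraph V) (ℓ : ℕ) : Set (Sym2 V → ZMod 2) :=
  {f | ∃ (v : V) (p : G.Walk v v), p.IsCycle ∧ p.length ≤ ℓ ∧ f = walkChar p}

/-- The cycles of length at most `ℓ` generate the cycle space of `G` over GF(2). -/
def GeneratesLE {V : Type u} (G : SimpleGraph V) (ℓ : ℕ) : Prop :=
  ∀ ⦃v : V⦄ (p : G.Walk v v), p.IsCycle →
    walkChar p ∈ Submodule.span (ZMod 2) (cycleChars G ℓ)

/-- `ℓ(G)`: the least `ℓ` such that the cycles of length at most `ℓ`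
generate the cycle space of `G`. -/
noncomputable def ellGraph {V : Type u} (G : SimpleGraph V) : ℕ :=
  sInf {ℓ | GeneratesLE G ℓ}

/-- `Γ` is a set of cycles of `G` generating its cycle space over GF(2). -/
def GeneratesSet {V : Type u} (G : SimpleGraph V) (Γ : Set (Σ v : V, G.Walk v v)) : Prop :=
  (∀ c ∈ Γ, c.2.IsCycle) ∧
  ∀ ⦃v : V⦄ (p : G.Walk v v), p.IsCycle →
    walkChar p ∈ Submodule.span (ZMod 2) {f | ∃ c ∈ Γ, f = walkChar c.2}

/-- A bramble: a collection of connected vertex sets, any two of which have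
connected union. -/
def IsBramble {V : Type u} (G : SimpleGraph V) (B : Set (Set V)) : Prop :=
  (∀ S ∈ B, IsConnSet G S) ∧ ∀ S ∈ B, ∀ S' ∈ B, IsConnSet G (S ∪ S')

/-- `X` is a connected cover of the bramble `B`. -/
def IsConnCover {V : Type u} (G : SimpleGraph V) (B : Set (Set V)) (X : Set V) : Prop :=
  IsConnSet G X ∧ ∀ S ∈ B, (X ∩ S).Nonempty

/-- The connected order of a bramble: the least size of a connected cover. -/
noncomputable def connOrder {V : Type u} (G : SimpleGraph V) (B : Set (Set V)) : ℕ :=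
  sInf {n | ∃ X, IsConnCover G B X ∧ X.ncard = n}

/-- The maximum connected order of a bramble of `G`. -/
noncomputable def cbn {V : Type u} (G : SimpleGraph V) : ℕ :=
  sSup {n | ∃ B, IsBramble G B ∧ connOrder G B = n}

/-- A geodesic cycle: a cycle containing a shortest `G`-path between any two
of its vertices. -/
def IsGeodesicCycle {V : Type u} (G : SimpleGraph V) {v : V} (p : G.Walk v v) : Prop :=
  p.IsCycle ∧ ∀ x ∈ p.support, ∀ y ∈ p.support,
    ∃ q : G.Walk x y, q.length = G.dist x y ∧ ∀ e ∈ q.edges, e ∈ p.edges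

/-- The graph obtained from `K_n` by subdividing every edge exactly `k` times:
the edge between `i < j` is replaced by the path
`i, ((i,j),0), ((i,j),1), …, ((i,j),k-1), j`. -/
def subK (n k : ℕ) : SimpleGraph (Fin n ⊕ ({p : Fin n × Fin n // p.1 < p.2} × Fin k)) :=
  SimpleGraph.fromRel fun u v =>
    match u, v with
    | Sum.inl i, Sum.inl j => i < j ∧ k = 0
    | Sum.inl i, Sum.inr (e, c) =>
        (e.val.1 = i ∧ (c : ℕ) = 0) ∨ (e.val.2 = i ∧ (c : ℕ) = k - 1)
    | Sum.inr (e, c), Sum.inr (e', c') => e = e' ∧ (c' : ℕ) = (c : ℕ) + 1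
    | _, _ => False

/-- The bramble of Section 5: all components `C(X)` of `G − X` containing the
branch vertices outside `X`, over all connected `X` of size at most `r`. -/
def subKBramble (n k r : ℕ) : Set (Set (Fin n ⊕ ({p : Fin n × Fin n // p.1 < p.2} × Fin k))) :=
  {C | ∃ (X : Set (Fin n ⊕ ({p : Fin n × Fin n // p.1 < p.2} × Fin k))) (i : Fin n),
    IsConnSet (subK n k) X ∧ X.ncard ≤ r ∧ Sum.inl i ∉ X ∧
    C = {w | ConnIn (subK n k) Xᶜ (Sum.inl i) w}}

/-!
A connected set `X` that meets the interior of a subdivided edge either lies inside that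
interior or reaches a branch vertex of `X` through the whole segment from the meeting point to one
end of the edge. Hence the branch vertices of `X` are joined by edges whose entire subdivision
path lies in `X`, and a spanning tree of these shows `|X| ≥ |S| + (|S| - 1) k` for the set `S` of
branch vertices in `X`. With `S` all `n` branch vertices this exceeds `r`, so `X` misses a branch
vertex; branch vertices outside `X` are joined along an edge that `X` avoids, or, when `X` lies
inside that edge, through a third branch vertex.

If the components `C(X)` and `C(X')` did not touch, every branch vertex would lie in `X` or in
`X'`, and on each of the `p q` edges between the `p` branch vertices outside `X` and the `q`
outside `X'`, the final segment cut out by `X` and the initial one cut out by `X'` would overlap.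
Adding up gives `|X| + |X'| ≥ (2n - 1)(k + 1) - 2k > 2r`. Finally, a connected set of size at most
`r` misses a branch vertex and is disjoint from its own component `C(Y)`, so it is no cover.
-/

namespace ConnIn

variable {V : Type u} {G : SimpleGraph V} {S T : Set V} {x y z : V}

lemma refl (hx : x ∈ S) : ConnIn G S x x := ⟨.nil, by simpa using hx⟩

lemma symm (h : ConnIn G S x y) : ConnIn G S y x := by
  obtain ⟨p, hp⟩ := h
  exact ⟨p.reverse, by simpa using hp⟩

lemma trans (h : ConnIn G S x y) (h' : ConnIn G S y z) : ConnIn G S x z := by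
  obtain ⟨p, hp⟩ := h
  obtain ⟨q, hq⟩ := h'
  refine ⟨p.append q, fun v hv => ?_⟩
  rcases (Walk.mem_support_append_iff p q).1 hv with hv | hv
  exacts [hp v hv, hq v hv]

lemma mono (hST : S ⊆ T) (h : ConnIn G S x y) : ConnIn G T x y := by
  obtain ⟨p, hp⟩ := h
  exact ⟨p, fun v hv => hST (hp v hv)⟩

lemma of_adj (hx : x ∈ S) (hy : y ∈ S) (h : G.Adj x y) : ConnIn G S x y :=
  ⟨.cons h .nil, by simp [hx, hy]⟩

lemma mem_right (h : ConnIn G S x y) : y ∈ S := by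
  obtain ⟨p, hp⟩ := h
  exact hp y p.end_mem_support

lemma mem_of_closed {Z : Set V} (h : ConnIn G S x y) (hx : x ∈ Z)
    (hZ : ∀ ⦃u v⦄, u ∈ Z → v ∈ S → G.Adj u v → v ∈ Z) : y ∈ Z := by
  obtain ⟨p, hp⟩ := h
  induction p with
  | nil => exact hx
  | cons hadj p ih =>
    exact ih (hZ hx (hp _ (by simp)) hadj) fun v hv => hp v (by simp [hv])

lemma setOf (h : ConnIn G S x y) : ConnIn G {w | ConnIn G S x w} x y := by
  classical
  obtain ⟨p, hp⟩ := h
  exact ⟨p, fun v hv => ⟨p.takeUntil v hv, fun w hw =>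
    hp w (Walk.support_takeUntil_subset_support p hv hw)⟩⟩

end ConnIn

lemma isConnSet_setOf_connIn {V : Type u} {G : SimpleGraph V} {S : Set V} {x : V}
    (hx : x ∈ S) : IsConnSet G {w | ConnIn G S x w} :=
  ⟨⟨x, ConnIn.refl hx⟩, fun _ hy _ hz => hy.setOf.symm.trans hz.setOf⟩

def Touching {V : Type u} (G : SimpleGraph V) (S T : Set V) : Prop :=
  ∃ x ∈ S, ∃ y ∈ T, x = y ∨ G.Adj x y

namespace Touching

variable {V : Type u} {G : SimpleGraph V} {S S' T T' : Set V}

lemma symm (h : Touching G S T) : Touching G T S := by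
  obtain ⟨x, hx, y, hy, hxy⟩ := h
  exact ⟨y, hy, x, hx, hxy.imp Eq.symm fun h => h.symm⟩

lemma mono (hS : S ⊆ S') (hT : T ⊆ T') (h : Touching G S T) : Touching G S' T' := by
  obtain ⟨x, hx, y, hy, hxy⟩ := h
  exact ⟨x, hS hx, y, hT hy, hxy⟩

lemma isConnSet_union (h : Touching G S T) (hS : IsConnSet G S) (hT : IsConnSet G T) :
    IsConnSet G (S ∪ T) := by
  obtain ⟨x, hx, y, hy, hxy⟩ := h
  have hxy' : ConnIn G (S ∪ T) x y := by
    rcases hxy with rfl | hadj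
    · exact ConnIn.refl (Or.inl hx)
    · exact ConnIn.of_adj (Or.inl hx) (Or.inr hy) hadj
  have hfrom_x : ∀ w ∈ S ∪ T, ConnIn G (S ∪ T) x w := by
    rintro w (hw | hw)
    · exact (hS.2 x hx w hw).mono Set.subset_union_left
    · exact hxy'.trans ((hT.2 y hy w hw).mono Set.subset_union_right)
  exact ⟨⟨x, Or.inl hx⟩, fun u hu v hv => (hfrom_x u hu).symm.trans (hfrom_x v hv)⟩

end Touching

abbrev KEdge (n : ℕ) := {p : Fin n × Fin n // p.1 < p.2}

abbrev SubKVert (n k : ℕ) := Fin n ⊕ (KEdge n × Fin k)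

namespace SubK

open Sum Finset

variable {n k : ℕ}

@[simp] lemma adj_inl_inl {i j : Fin n} : (subK n k).Adj (inl i) (inl j) ↔ i ≠ j ∧ k = 0 := by
  rw [subK, fromRel_adj]
  constructor
  · rintro ⟨hne, (⟨-, hk⟩ | ⟨-, hk⟩)⟩ <;> exact ⟨fun h => hne (h ▸ rfl), hk⟩
  · rintro ⟨hne, hk⟩
    refine ⟨fun h => hne (inl_injective h), ?_⟩
    rcases lt_or_gt_of_ne hne with h | h
    exacts [Or.inl ⟨h, hk⟩, Or.inr ⟨h, hk⟩]

@[simp] lemma adj_inl_inr {i : Fin n} {e : KEdge n} {c : Fin k} :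
    (subK n k).Adj (inl i) (inr (e, c)) ↔
      (e.1.1 = i ∧ (c : ℕ) = 0) ∨ (e.1.2 = i ∧ (c : ℕ) = k - 1) := by
  rw [subK, fromRel_adj]
  simp

@[simp] lemma adj_inr_inl {i : Fin n} {e : KEdge n} {c : Fin k} :
    (subK n k).Adj (inr (e, c)) (inl i) ↔
      (e.1.1 = i ∧ (c : ℕ) = 0) ∨ (e.1.2 = i ∧ (c : ℕ) = k - 1) := by
  rw [adj_comm, adj_inl_inr]

@[simp] lemma adj_inr_inr {e e' : KEdge n} {c c' : Fin k} :
    (subK n k).Adj (inr (e, c)) (inr (e', c')) ↔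
      e = e' ∧ ((c' : ℕ) = c + 1 ∨ (c : ℕ) = c' + 1) := by
  rw [subK, fromRel_adj]
  constructor
  · rintro ⟨-, (⟨rfl, h⟩ | ⟨rfl, h⟩)⟩
    exacts [⟨rfl, Or.inl h⟩, ⟨rfl, Or.inr h⟩]
  · rintro ⟨rfl, h⟩
    refine ⟨fun heq => ?_, h.imp (fun h => ⟨rfl, h⟩) (fun h => ⟨rfl, h⟩)⟩
    have := congrArg Fin.val (Prod.mk.inj (inr_injective heq)).2
    omega

/-- The `j`-th vertex of the subdivided edge `e`, counted from `e.1.1` (position `0`) to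
`e.1.2` (position `k + 1`). -/
def pathVertex (k : ℕ) (e : KEdge n) (j : ℕ) : SubKVert n k :=
  if j = 0 then inl e.1.1 else if h : j - 1 < k then inr (e, ⟨j - 1, h⟩) else inl e.1.2

@[simp] lemma pathVertex_zero (e : KEdge n) : pathVertex k e 0 = inl e.1.1 := rfl

@[simp] lemma pathVertex_succ (e : KEdge n) (c : Fin k) :
    pathVertex k e (c + 1) = inr (e, c) := by
  simp [pathVertex]

@[simp] lemma pathVertex_last (e : KEdge n) : pathVertex k e (k + 1) = inl e.1.2 := by
  simp [pathVertex]

lemma pathVertex_cases (e : KEdge n) (j : ℕ) :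
    pathVertex k e j = inl e.1.1 ∨ pathVertex k e j = inl e.1.2 ∨
      ∃ c, pathVertex k e j = inr (e, c) := by
  unfold pathVertex
  split_ifs <;> simp

lemma position_cases {j : ℕ} (hj : j ≤ k + 1) :
    j = 0 ∨ j = k + 1 ∨ ∃ c : Fin k, j = c + 1 := by
  rcases Nat.eq_zero_or_pos j with h | h
  · exact Or.inl h
  rcases eq_or_lt_of_le hj with h' | h'
  · exact Or.inr (Or.inl h')
  · exact Or.inr (Or.inr ⟨⟨j - 1, by omega⟩, by simp; omega⟩)

lemma adj_pathVertex (e : KEdge n) {j : ℕ} (hj : j ≤ k) :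
    (subK n k).Adj (pathVertex k e j) (pathVertex k e (j + 1)) := by
  rcases Nat.eq_zero_or_pos j with rfl | hj0
  · rcases Nat.eq_zero_or_pos k with rfl | hk
    · simpa using e.2.ne
    · have : pathVertex k e 1 = inr (e, ⟨0, hk⟩) := pathVertex_succ e ⟨0, hk⟩
      rw [this, pathVertex_zero, adj_inl_inr]
      exact Or.inl ⟨rfl, rfl⟩
  obtain ⟨c, rfl⟩ : ∃ c : Fin k, j = c + 1 := ⟨⟨j - 1, by omega⟩, by simp; omega⟩
  rcases Nat.lt_or_ge (c + 1) k with h | h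
  · rw [pathVertex_succ, show (c : ℕ) + 1 + 1 = (⟨c + 1, h⟩ : Fin k) + 1 from rfl,
      pathVertex_succ, adj_inr_inr]
    simp
  · rw [pathVertex_succ, show (c : ℕ) + 1 + 1 = k + 1 by omega, pathVertex_last, adj_inr_inl]
    omega

lemma connIn_pathVertex {S : Set (SubKVert n k)} (e : KEdge n) {a b : ℕ} (hab : a ≤ b)
    (hb : b ≤ k + 1) (hS : ∀ j, a ≤ j → j ≤ b → pathVertex k e j ∈ S) :
    ConnIn (subK n k) S (pathVertex k e a) (pathVertex k e b) := by
  induction b, hab using Nat.le_induction with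
  | base => exact ConnIn.refl (hS a le_rfl le_rfl)
  | succ b hab ih =>
    refine (ih (by omega) fun j h1 h2 => hS j h1 (by omega)).trans
      (ConnIn.of_adj (hS b hab (by omega)) (hS (b + 1) (by omega) le_rfl) ?_)
    exact adj_pathVertex e (by omega)

lemma exists_kEdge {a b : Fin n} (h : a ≠ b) :
    ∃ e : KEdge n, (e.1.1 = a ∧ e.1.2 = b) ∨ (e.1.1 = b ∧ e.1.2 = a) := by
  rcases lt_or_gt_of_ne h with h | h
  exacts [⟨⟨(a, b), h⟩, Or.inl ⟨rfl, rfl⟩⟩, ⟨⟨(b, a), h⟩, Or.inr ⟨rfl, rfl⟩⟩]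

lemma connIn_inl_of_kEdge {S : Set (SubKVert n k)} {a b : Fin n} {e : KEdge n}
    (he : (e.1.1 = a ∧ e.1.2 = b) ∨ (e.1.1 = b ∧ e.1.2 = a))
    (ha : inl a ∈ S) (hb : inl b ∈ S) (hint : ∀ c, inr (e, c) ∈ S) :
    ConnIn (subK n k) S (inl a) (inl b) := by
  have h := connIn_pathVertex (S := S) e (Nat.zero_le (k + 1)) le_rfl fun j _ _ => by
    rcases pathVertex_cases (k := k) e j with h | h | ⟨c, h⟩ <;> rw [h]
    · rcases he with ⟨h1, -⟩ | ⟨h1, -⟩ <;> rwa [h1]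
    · rcases he with ⟨-, h2⟩ | ⟨-, h2⟩ <;> rwa [h2]
    · exact hint c
  rw [pathVertex_zero, pathVertex_last] at h
  rcases he with ⟨rfl, rfl⟩ | ⟨rfl, rfl⟩
  exacts [h, h.symm]

lemma mem_interior_of_isConnSet {X : Set (SubKVert n k)} (hX : IsConnSet (subK n k) X)
    {e : KEdge n} (h1 : inl e.1.1 ∉ X) (h2 : inl e.1.2 ∉ X) {c : Fin k} (hc : inr (e, c) ∈ X)
    {v : SubKVert n k} (hv : v ∈ X) : ∃ c', v = inr (e, c') := by
  refine (hX.2 _ hc v hv).mem_of_closed (Z := {v | ∃ c', v = inr (e, c')}) ⟨c, rfl⟩ ?_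
  rintro _ (w | ⟨e', c''⟩) ⟨c', rfl⟩ hw hadj
  · rcases adj_inr_inl.1 hadj with ⟨rfl, -⟩ | ⟨rfl, -⟩
    exacts [absurd hw h1, absurd hw h2]
  · exact ⟨c'', by rw [(adj_inr_inr.1 hadj).1]⟩

lemma connIn_compl_of_isConnSet (hn : 3 ≤ n) {X : Set (SubKVert n k)}
    (hX : IsConnSet (subK n k) X) {a b : Fin n} (ha : inl a ∉ X) (hb : inl b ∉ X) :
    ConnIn (subK n k) Xᶜ (inl a) (inl b) := by
  rcases eq_or_ne a b with rfl | hab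
  · exact ConnIn.refl ha
  obtain ⟨e, he⟩ := exists_kEdge hab
  by_cases hint : ∀ c, inr (e, c) ∉ X
  · exact connIn_inl_of_kEdge he ha hb hint
  push Not at hint
  obtain ⟨c, hc⟩ := hint
  have h1 : inl e.1.1 ∉ X := by rcases he with ⟨h, -⟩ | ⟨h, -⟩ <;> rwa [h]
  have h2 : inl e.1.2 ∉ X := by rcases he with ⟨-, h⟩ | ⟨-, h⟩ <;> rwa [h]
  have hXe := fun v (hv : v ∈ X) => mem_interior_of_isConnSet hX h1 h2 hc hv
  -- `X` sits inside the edge `ab`, so we go around it through a third branch vertex `t`.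
  obtain ⟨t, hta, htb⟩ := Fin.exists_ne_and_ne_of_two_lt a b (by omega)
  have ht : inl t ∉ X := fun h => by obtain ⟨_, h⟩ := hXe _ h; cases h
  have hfree : ∀ {x y : Fin n}, x ≠ y → (t = x ∨ t = y) → inl x ∉ X → inl y ∉ X →
      ConnIn (subK n k) Xᶜ (inl x) (inl y) := by
    intro x y hxy htxy hx hy
    obtain ⟨e', he'⟩ := exists_kEdge hxy
    refine connIn_inl_of_kEdge he' hx hy fun c' hc' => ?_
    obtain ⟨_, heq⟩ := hXe _ hc'
    obtain rfl := (Prod.mk.inj (inr_injective heq)).1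
    rcases he with ⟨rfl, rfl⟩ | ⟨rfl, rfl⟩ <;> rcases he' with ⟨hx, hy⟩ | ⟨hx, hy⟩ <;>
      rcases htxy with rfl | rfl <;> simp_all
  exact (hfree (Ne.symm hta) (Or.inr rfl) ha ht).trans (hfree htb (Or.inl rfl) ht hb)

def Attached (X : Set (SubKVert n k)) (R : Set (Fin n)) : SubKVert n k → Prop
  | inl j => j ∈ R
  | inr (e, c) => (e.1.1 ∈ R ∧ ∀ c' : Fin k, c' ≤ c → inr (e, c') ∈ X) ∨
      (e.1.2 ∈ R ∧ ∀ c' : Fin k, c ≤ c' → inr (e, c') ∈ X)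

section Attached

variable {X : Set (SubKVert n k)} {R : Set (Fin n)}

lemma Attached.of_adj (hRX : ∀ j ∈ R, inl j ∈ X)
    (hR : ∀ e : KEdge n, inl e.1.1 ∈ X → inl e.1.2 ∈ X → (∀ c, inr (e, c) ∈ X) →
      (e.1.1 ∈ R ↔ e.1.2 ∈ R))
    {u v : SubKVert n k} (hu : Attached X R u) (hv : v ∈ X) (huv : (subK n k).Adj u v) :
    Attached X R v := by
  rcases u with j | ⟨e, c⟩ <;> rcases v with j' | ⟨e', c'⟩
  · obtain ⟨hjj', hk⟩ := adj_inl_inl.1 huv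
    subst hk
    obtain ⟨e, he⟩ := exists_kEdge hjj'
    rcases he with ⟨rfl, rfl⟩ | ⟨rfl, rfl⟩
    · exact (hR e (hRX _ hu) hv fun c => c.elim0).1 hu
    · exact (hR e hv (hRX _ hu) fun c => c.elim0).2 hu
  · rcases adj_inl_inr.1 huv with ⟨rfl, hc⟩ | ⟨rfl, hc⟩
    · refine Or.inl ⟨hu, fun c'' h => ?_⟩
      obtain rfl : c'' = c' := Fin.ext (by simp only [Fin.le_def] at h; omega)
      exact hv
    · refine Or.inr ⟨hu, fun c'' h => ?_⟩
      obtain rfl : c'' = c' := Fin.ext (by have := c''.2; simp only [Fin.le_def] at h; omega)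
      exact hv
  · rcases hu with ⟨he, hbelow⟩ | ⟨he, habove⟩ <;> rcases adj_inr_inl.1 huv with ⟨rfl, hc⟩ | ⟨rfl, hc⟩
    · exact he
    · refine (hR e (hRX _ he) hv fun c' => hbelow c' ?_).1 he
      simp only [Fin.le_def]; omega
    · refine (hR e hv (hRX _ he) fun c' => habove c' ?_).2 he
      simp only [Fin.le_def]; omega
    · exact he
  · obtain ⟨rfl, hcc'⟩ := adj_inr_inr.1 huv
    rcases hu with ⟨he, hbelow⟩ | ⟨he, habove⟩
    · refine Or.inl ⟨he, fun c'' h => ?_⟩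
      rcases eq_or_ne c'' c' with rfl | hne
      · exact hv
      · exact hbelow c'' (by simp only [Fin.le_def, ne_eq, Fin.ext_iff] at h hne ⊢; omega)
    · refine Or.inr ⟨he, fun c'' h => ?_⟩
      rcases eq_or_ne c'' c' with rfl | hne
      · exact hv
      · exact habove c'' (by simp only [Fin.le_def, ne_eq, Fin.ext_iff] at h hne ⊢; omega)

lemma attached_of_connIn (hRX : ∀ j ∈ R, inl j ∈ X)
    (hR : ∀ e : KEdge n, inl e.1.1 ∈ X → inl e.1.2 ∈ X → (∀ c, inr (e, c) ∈ X) →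
      (e.1.1 ∈ R ↔ e.1.2 ∈ R))
    {j : Fin n} {v : SubKVert n k} (hj : j ∈ R) (h : ConnIn (subK n k) X (inl j) v) :
    Attached X R v :=
  h.mem_of_closed (Z := {v | Attached X R v}) hj fun _ _ hu hv huv =>
    hu.of_adj hRX hR hv huv

end Attached

section Segments

variable {X : Set (SubKVert n k)} {s : Fin n} {e : KEdge n}

lemma attached_of_isConnSet (hX : IsConnSet (subK n k) X) (hs : inl s ∈ X) {c : Fin k}
    (hc : inr (e, c) ∈ X) : Attached X {j | inl j ∈ X} (inr (e, c)) :=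
  attached_of_connIn (fun _ h => h) (fun _ h1 h2 _ => iff_of_true h1 h2) hs (hX.2 _ hs _ hc)

lemma pathVertex_mem_of_le (hX : IsConnSet (subK n k) X) (hs : inl s ∈ X)
    (h1 : inl e.1.1 ∉ X) {j j' : ℕ} (hjj' : j ≤ j') (hj' : j' ≤ k + 1)
    (hj : pathVertex k e j ∈ X) : pathVertex k e j' ∈ X := by
  rcases position_cases (hjj'.trans hj') with rfl | rfl | ⟨c, rfl⟩
  · exact absurd hj h1
  · rwa [show j' = k + 1 by omega]
  rw [pathVertex_succ] at hj
  rcases attached_of_isConnSet hX hs hj with ⟨he, -⟩ | ⟨he, hR⟩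
  · exact absurd he h1
  rcases position_cases hj' with rfl | rfl | ⟨c', rfl⟩
  · omega
  · rwa [pathVertex_last]
  · rw [pathVertex_succ]
    exact hR c' (by simp only [Fin.le_def]; omega)

lemma pathVertex_mem_of_ge (hX : IsConnSet (subK n k) X) (hs : inl s ∈ X)
    (h2 : inl e.1.2 ∉ X) {j j' : ℕ} (hj'j : j' ≤ j) (hj : j ≤ k + 1)
    (hmem : pathVertex k e j ∈ X) : pathVertex k e j' ∈ X := by
  rcases position_cases hj with rfl | rfl | ⟨c, rfl⟩
  · rwa [show j' = 0 by omega]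
  · exact absurd (pathVertex_last (k := k) e ▸ hmem) h2
  rw [pathVertex_succ] at hmem
  rcases attached_of_isConnSet hX hs hmem with ⟨he, hL⟩ | ⟨he, -⟩
  · rcases position_cases (hj'j.trans hj) with rfl | rfl | ⟨c', rfl⟩
    · exact he
    · omega
    · rw [pathVertex_succ]
      exact hL c' (by simp only [Fin.le_def]; omega)
  · exact absurd he h2

lemma connIn_compl_pathVertex_zero (hX : IsConnSet (subK n k) X) (hs : inl s ∈ X)
    (h1 : inl e.1.1 ∉ X) {j : ℕ} (hj : j ≤ k + 1) (hjX : pathVertex k e j ∉ X) :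
    ConnIn (subK n k) Xᶜ (inl e.1.1) (pathVertex k e j) :=
  connIn_pathVertex e (Nat.zero_le j) hj fun _ _ hj' hmem =>
    hjX (pathVertex_mem_of_le hX hs h1 hj' hj hmem)

lemma connIn_compl_pathVertex_last (hX : IsConnSet (subK n k) X) (hs : inl s ∈ X)
    (h2 : inl e.1.2 ∉ X) {j : ℕ} (hj : j ≤ k + 1) (hjX : pathVertex k e j ∉ X) :
    ConnIn (subK n k) Xᶜ (inl e.1.2) (pathVertex k e j) := by
  rw [← pathVertex_last (k := k)]
  exact (connIn_pathVertex (S := Xᶜ) e hj le_rfl fun _ hj' hj'' hmem =>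
    hjX (pathVertex_mem_of_ge hX hs h2 hj' hj'' hmem)).symm

end Segments

section Counting

open scoped Classical

variable (X : Set (SubKVert n k))

noncomputable def branchIn : Finset (Fin n) := univ.filter fun i => inl i ∈ X

noncomputable def interiorIn (e : KEdge n) : Finset (Fin k) := univ.filter fun c => inr (e, c) ∈ X

noncomputable def fullEdges : Finset (KEdge n) :=
  univ.filter fun e => inl e.1.1 ∈ X ∧ inl e.1.2 ∈ X ∧ ∀ c, inr (e, c) ∈ X

lemma ncard_eq_card_branchIn_add_sum :
    X.ncard = #(branchIn X) + ∑ e, #(interiorIn X e) := by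
  rw [← Nat.card_coe_set_eq, Nat.card_eq_fintype_card, Fintype.card_subtype]
  simp only [branchIn, interiorIn, card_filter, Fintype.sum_sum_type, Fintype.sum_prod_type]

def fullEdgeGraph : SimpleGraph {i : Fin n // inl i ∈ X} :=
  fromRel fun a b => ∃ h : a.1 < b.1, ∀ c, inr (⟨(a.1, b.1), h⟩, c) ∈ X

variable {X}

@[simp] lemma mem_compl_branchIn {j : Fin n} : j ∈ (branchIn X)ᶜ ↔ inl j ∉ X := by
  simp [branchIn]

@[simp] lemma mem_interiorIn {e : KEdge n} {c : Fin k} : c ∈ interiorIn X e ↔ inr (e, c) ∈ X := by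
  simp [interiorIn]

lemma fullEdgeGraph_adj (e : KEdge n) (h1 : inl e.1.1 ∈ X) (h2 : inl e.1.2 ∈ X)
    (hint : ∀ c, inr (e, c) ∈ X) : (fullEdgeGraph X).Adj ⟨e.1.1, h1⟩ ⟨e.1.2, h2⟩ :=
  (fromRel_adj _ _ _).2 ⟨fun h => e.2.ne (congrArg Subtype.val h), Or.inl ⟨e.2, hint⟩⟩

lemma fullEdgeGraph_connected (hX : IsConnSet (subK n k) X) {s : Fin n} (hs : inl s ∈ X) :
    (fullEdgeGraph X).Connected := by
  have : Nonempty {i : Fin n // inl i ∈ X} := ⟨⟨s, hs⟩⟩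
  refine Connected.mk fun a b => ?_
  let R : Set (Fin n) := {j | ∃ hj : inl j ∈ X, (fullEdgeGraph X).Reachable a ⟨j, hj⟩}
  have hR : ∀ e : KEdge n, inl e.1.1 ∈ X → inl e.1.2 ∈ X → (∀ c, inr (e, c) ∈ X) →
      (e.1.1 ∈ R ↔ e.1.2 ∈ R) := by
    intro e h1 h2 hint
    have hadj := fullEdgeGraph_adj e h1 h2 hint
    exact ⟨fun ⟨_, hr⟩ => ⟨h2, hr.trans hadj.reachable⟩,
      fun ⟨_, hr⟩ => ⟨h1, hr.trans hadj.symm.reachable⟩⟩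
  obtain ⟨_, hb⟩ : b.1 ∈ R :=
    attached_of_connIn (fun _ h => h.1) hR ⟨a.2, Reachable.refl _⟩ (hX.2 _ a.2 _ b.2)
  exact hb

lemma card_branchIn_le (hX : IsConnSet (subK n k) X) {s : Fin n} (hs : inl s ∈ X) :
    #(branchIn X) ≤ #(fullEdges X) + 1 := by
  have hV : Nat.card {i : Fin n // inl i ∈ X} = #(branchIn X) := by
    rw [Nat.card_eq_fintype_card, Fintype.card_subtype]
    rfl
  have hE : Nat.card (fullEdgeGraph X).edgeSet ≤ #(fullEdges X) := by
    have hmem : ∀ e ∈ fullEdges X, inl e.1.1 ∈ X ∧ inl e.1.2 ∈ X ∧ ∀ c, inr (e, c) ∈ X :=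
      fun e he => (mem_filter.1 he).2
    let f : {e // e ∈ fullEdges X} → (fullEdgeGraph X).edgeSet := fun e =>
      ⟨s(⟨e.1.1.1, (hmem _ e.2).1⟩, ⟨e.1.1.2, (hmem _ e.2).2.1⟩),
        fullEdgeGraph_adj e.1 (hmem _ e.2).1 (hmem _ e.2).2.1 (hmem _ e.2).2.2⟩
    have hf : Function.Surjective f := by
      rintro ⟨z, hz⟩
      induction z using Sym2.ind with | _ a b => ?_
      obtain ⟨-, ⟨hab, hint⟩ | ⟨hab, hint⟩⟩ := (fromRel_adj _ _ _).1 ((mem_edgeSet _).1 hz)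
      · exact ⟨⟨⟨(a.1, b.1), hab⟩, mem_filter.2 ⟨mem_univ _, a.2, b.2, hint⟩⟩, rfl⟩
      · exact ⟨⟨⟨(b.1, a.1), hab⟩, mem_filter.2 ⟨mem_univ _, b.2, a.2, hint⟩⟩,
          Subtype.ext Sym2.eq_swap⟩
    simpa [Nat.card_eq_fintype_card] using Nat.card_le_card_of_surjective f hf
  have := (fullEdgeGraph_connected hX hs).card_vert_le_card_edgeSet_add_one
  omega

/-- A spanning tree of full edges on the set `S` of branch vertices of `X` accounts for
`|S| + (|S| - 1) k` vertices of `X`; the form `|S| (k + 1) ≤ … + k` avoids truncated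
subtraction. -/
lemma card_branchIn_mul_add_sum_le (hX : IsConnSet (subK n k) X) {s : Fin n} (hs : inl s ∈ X)
    (C : Finset (KEdge n)) (hC : ∀ e ∈ C, inl e.1.1 ∉ X ∨ inl e.1.2 ∉ X) :
    #(branchIn X) * (k + 1) + ∑ e ∈ C, #(interiorIn X e) ≤ X.ncard + k := by
  have hdisj : Disjoint (fullEdges X) C := disjoint_left.2 fun e hF hC' => by
    obtain ⟨-, h1, h2, -⟩ := mem_filter.1 hF
    rcases hC e hC' with h | h <;> contradiction
  have hfull : ∑ e ∈ fullEdges X, #(interiorIn X e) = #(fullEdges X) * k := by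
    rw [sum_const_nat fun e he => ?_]
    rw [interiorIn, filter_true_of_mem fun c _ => (mem_filter.1 he).2.2.2 c, card_univ,
      Fintype.card_fin]
  have hsum : #(fullEdges X) * k + ∑ e ∈ C, #(interiorIn X e) ≤ ∑ e, #(interiorIn X e) := by
    rw [← hfull, ← sum_union hdisj]
    exact sum_le_sum_of_subset (subset_univ _)
  have htree : #(branchIn X) * k ≤ (#(fullEdges X) + 1) * k :=
    Nat.mul_le_mul_right k (card_branchIn_le hX hs)
  rw [ncard_eq_card_branchIn_add_sum]
  nlinarith

lemma exists_inl_not_mem (hX : IsConnSet (subK n k) X)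
    (hcard : X.ncard ≤ (n - 1) * (k + 1) - (k + 1) / 2) : ∃ i, inl i ∉ X := by
  by_contra! hall
  obtain _ | n := n
  · have := (Set.ncard_pos X.toFinite).2 hX.1
    omega
  have hS : branchIn X = univ := filter_true_of_mem fun i _ => hall i
  have := card_branchIn_mul_add_sum_le hX (hall 0) ∅ (by simp)
  rw [hS, card_univ, Fintype.card_fin, sum_empty] at this
  have : (n + 1) * (k + 1) = n * (k + 1) + (k + 1) := by ring
  simp only [add_tsub_cancel_right] at hcard
  omega

end Counting

section Bramble

open scoped Classical

variable {X X' : Set (SubKVert n k)}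

/-- `X` meets `e` in a final segment and `X'` in an initial one; a gap between the two segments,
or two segments that merely abut, would let the two components touch. -/
lemma succ_le_card_interiorIn_add (hX : IsConnSet (subK n k) X) (hX' : IsConnSet (subK n k) X')
    {e : KEdge n} (h1 : inl e.1.1 ∉ X) (h1' : inl e.1.1 ∈ X') (h2 : inl e.1.2 ∈ X)
    (h2' : inl e.1.2 ∉ X')
    (hnt : ¬ Touching (subK n k) {w | ConnIn (subK n k) Xᶜ (inl e.1.1) w}
      {w | ConnIn (subK n k) X'ᶜ (inl e.1.2) w}) :
    k + 1 ≤ #(interiorIn X e) + #(interiorIn X' e) := by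
  have hcover : interiorIn X e ∪ interiorIn X' e = univ := by
    refine eq_univ_of_forall fun c => ?_
    by_contra! hc
    simp only [mem_union, not_or, mem_interiorIn] at hc
    have hcX : pathVertex k e (c + 1) ∉ X := by simpa using hc.1
    have hcX' : pathVertex k e (c + 1) ∉ X' := by simpa using hc.2
    exact hnt ⟨_, connIn_compl_pathVertex_zero hX h2 h1 (by omega) hcX,
      _, connIn_compl_pathVertex_last hX' h1' h2' (by omega) hcX', Or.inl rfl⟩
  -- If the segments only abut, the first vertex of `X` on `e` and its predecessor are adjacent
  -- and lie in the two components.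
  have hinter : (interiorIn X e ∩ interiorIn X' e).Nonempty := by
    by_contra hempty
    have hex : ∃ j, pathVertex k e j ∈ X := ⟨k + 1, by simpa using h2⟩
    have hm_le : Nat.find hex ≤ k + 1 := Nat.find_min' hex (by simpa using h2)
    have hm0 : Nat.find hex ≠ 0 := fun h => h1 (by simpa [h] using Nat.find_spec hex)
    have hprev : pathVertex k e (Nat.find hex - 1) ∉ X := Nat.find_min hex (by omega)
    have hcur : pathVertex k e (Nat.find hex) ∉ X' := by
      rcases position_cases hm_le with h | h | ⟨c, h⟩
      · exact absurd h hm0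
      · simpa [h] using h2'
      · have hcX : c ∈ interiorIn X e := mem_interiorIn.2 (by simpa [h] using Nat.find_spec hex)
        have hcX' : c ∉ interiorIn X' e := fun hc => hempty ⟨c, mem_inter.2 ⟨hcX, hc⟩⟩
        simpa [h] using hcX'
    refine hnt ⟨_, connIn_compl_pathVertex_zero hX h2 h1 (by omega) hprev,
      _, connIn_compl_pathVertex_last hX' h1' h2' hm_le hcur, Or.inr ?_⟩
    simpa [Nat.sub_add_cancel (Nat.pos_of_ne_zero hm0)] using
      adj_pathVertex (k := k) e (j := Nat.find hex - 1) (by omega)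
  have := card_union_add_card_inter (interiorIn X e) (interiorIn X' e)
  rw [hcover, card_univ, Fintype.card_fin] at this
  have := hinter.card_pos
  omega

noncomputable def crossEdges (A B : Finset (Fin n)) : Finset (KEdge n) :=
  univ.filter fun e => (e.1.1 ∈ A ∧ e.1.2 ∈ B) ∨ (e.1.1 ∈ B ∧ e.1.2 ∈ A)

lemma card_mul_card_le_card_crossEdges {A B : Finset (Fin n)} (hAB : Disjoint A B) :
    #A * #B ≤ #(crossEdges A B) := by
  rw [← card_product]
  refine card_le_card_of_surjOn (fun e => if e.1.1 ∈ A then (e.1.1, e.1.2) else (e.1.2, e.1.1))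
    fun ⟨a, b⟩ hab => ?_
  obtain ⟨ha, hb⟩ := mem_product.1 hab
  have hb' : b ∉ A := disjoint_right.1 hAB hb
  obtain ⟨e, ⟨rfl, rfl⟩ | ⟨rfl, rfl⟩⟩ := exists_kEdge (ne_of_mem_of_not_mem ha hb')
  · exact ⟨e, by simp [crossEdges, ha, hb], by simp [ha]⟩
  · exact ⟨e, by simp [crossEdges, ha, hb], by simp [hb']⟩

variable {i i' : Fin n}

lemma succ_le_card_interiorIn_add_of_mem_crossEdges (hn : 3 ≤ n)
    (hX : IsConnSet (subK n k) X) (hX' : IsConnSet (subK n k) X')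
    (hi : inl i ∉ X) (hi' : inl i' ∉ X')
    (hnt : ¬ Touching (subK n k) {w | ConnIn (subK n k) Xᶜ (inl i) w}
      {w | ConnIn (subK n k) X'ᶜ (inl i') w})
    (hcov : ∀ j, inl j ∈ X ∨ inl j ∈ X') {e : KEdge n}
    (he : e ∈ crossEdges (branchIn X)ᶜ (branchIn X')ᶜ) :
    k + 1 ≤ #(interiorIn X e) + #(interiorIn X' e) := by
  have hsub : ∀ {Y : Set (SubKVert n k)} (hY : IsConnSet (subK n k) Y) {j j' : Fin n},
      inl j ∉ Y → inl j' ∉ Y →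
      {w | ConnIn (subK n k) Yᶜ (inl j') w} ⊆ {w | ConnIn (subK n k) Yᶜ (inl j) w} :=
    fun hY _ _ hj hj' _ hw => (connIn_compl_of_isConnSet hn hY hj hj').trans hw
  rcases (mem_filter.1 he).2 with ⟨h1, h2⟩ | ⟨h1, h2⟩ <;> rw [mem_compl_branchIn] at h1 h2
  · exact succ_le_card_interiorIn_add hX hX' h1 ((hcov _).resolve_left h1)
      ((hcov _).resolve_right h2) h2 fun h => hnt (h.mono (hsub hX hi h1) (hsub hX' hi' h2))
  · rw [add_comm (#(interiorIn X e))]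
    exact succ_le_card_interiorIn_add hX' hX h1 ((hcov _).resolve_right h1)
      ((hcov _).resolve_left h2) h2 fun h => hnt (h.symm.mono (hsub hX hi h2) (hsub hX' hi' h1))

lemma mul_succ_le_sum_interiorIn_crossEdges (hn : 3 ≤ n)
    (hX : IsConnSet (subK n k) X) (hX' : IsConnSet (subK n k) X')
    (hi : inl i ∉ X) (hi' : inl i' ∉ X')
    (hnt : ¬ Touching (subK n k) {w | ConnIn (subK n k) Xᶜ (inl i) w}
      {w | ConnIn (subK n k) X'ᶜ (inl i') w})
    (hcov : ∀ j, inl j ∈ X ∨ inl j ∈ X') :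
    #(branchIn X)ᶜ * #(branchIn X')ᶜ * (k + 1) ≤
      ∑ e ∈ crossEdges (branchIn X)ᶜ (branchIn X')ᶜ, #(interiorIn X e) +
        ∑ e ∈ crossEdges (branchIn X)ᶜ (branchIn X')ᶜ, #(interiorIn X' e) := by
  have hAB : Disjoint (branchIn X)ᶜ (branchIn X')ᶜ := disjoint_left.2 fun j hjA hjB =>
    (hcov j).elim (mem_compl_branchIn.1 hjA) (mem_compl_branchIn.1 hjB)
  calc #(branchIn X)ᶜ * #(branchIn X')ᶜ * (k + 1)
      ≤ #(crossEdges (branchIn X)ᶜ (branchIn X')ᶜ) * (k + 1) :=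
        Nat.mul_le_mul_right _ (card_mul_card_le_card_crossEdges hAB)
    _ = ∑ e ∈ crossEdges (branchIn X)ᶜ (branchIn X')ᶜ, (k + 1) := by rw [sum_const, smul_eq_mul]
    _ ≤ _ := sum_le_sum fun e he =>
        succ_le_card_interiorIn_add_of_mem_crossEdges hn hX hX' hi hi' hnt hcov he
    _ = _ := sum_add_distrib

lemma touching_of_isConnSet (hn : 3 ≤ n) (hX : IsConnSet (subK n k) X)
    (hX' : IsConnSet (subK n k) X') (hcard : X.ncard ≤ (n - 1) * (k + 1) - (k + 1) / 2)
    (hcard' : X'.ncard ≤ (n - 1) * (k + 1) - (k + 1) / 2)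
    (hi : inl i ∉ X) (hi' : inl i' ∉ X') :
    Touching (subK n k) {w | ConnIn (subK n k) Xᶜ (inl i) w}
      {w | ConnIn (subK n k) X'ᶜ (inl i') w} := by
  by_contra hnt
  have hcov : ∀ j, inl j ∈ X ∨ inl j ∈ X' := fun j => by
    by_contra! h
    exact hnt ⟨_, connIn_compl_of_isConnSet hn hX hi h.1, _,
      connIn_compl_of_isConnSet hn hX' hi' h.2, Or.inl rfl⟩
  obtain ⟨a, ha⟩ := exists_inl_not_mem hX hcard
  obtain ⟨b, hb⟩ := exists_inl_not_mem hX' hcard'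
  have hcount := card_branchIn_mul_add_sum_le hX ((hcov b).resolve_right hb)
    (crossEdges (branchIn X)ᶜ (branchIn X')ᶜ) fun e he => by
      rcases (mem_filter.1 he).2 with ⟨h, -⟩ | ⟨-, h⟩
      exacts [Or.inl (mem_compl_branchIn.1 h), Or.inr (mem_compl_branchIn.1 h)]
  have hcount' := card_branchIn_mul_add_sum_le hX' ((hcov a).resolve_left ha)
    (crossEdges (branchIn X)ᶜ (branchIn X')ᶜ) fun e he => by
      rcases (mem_filter.1 he).2 with ⟨-, h⟩ | ⟨h, -⟩
      exacts [Or.inr (mem_compl_branchIn.1 h), Or.inl (mem_compl_branchIn.1 h)]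
  have hcross := mul_succ_le_sum_interiorIn_crossEdges hn hX hX' hi hi' hnt hcov
  have hA : 0 < #(branchIn X)ᶜ := card_pos.2 ⟨a, mem_compl_branchIn.2 ha⟩
  have hB : 0 < #(branchIn X')ᶜ := card_pos.2 ⟨b, mem_compl_branchIn.2 hb⟩
  have hsplit := card_add_card_compl (branchIn X)
  have hsplit' := card_add_card_compl (branchIn X')
  generalize #(branchIn X)ᶜ = p, #(branchIn X')ᶜ = q at *
  simp only [Fintype.card_fin] at hsplit hsplit'
  have hpq : p + q ≤ p * q + 1 := by nlinarith
  have hsum : (2 * (n - 1) + 1) * (k + 1) ≤ (#(branchIn X) + #(branchIn X') + p * q) * (k + 1) :=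
    Nat.mul_le_mul_right _ (by omega)
  have hk : k + 1 ≤ (n - 1) * (k + 1) := Nat.le_mul_of_pos_left _ (by omega)
  rw [add_mul, add_mul, add_mul, mul_assoc] at hsum
  omega

end Bramble

end SubK

/-- in the `k`-fold subdivision of `K_n`, with
`r = (n−1)(k+1) − ⌊(k+1)/2⌋`, every connected set `X` of size at most `r`
misses some branch vertex and all branch vertices outside `X` lie in one
component of `G − X`; the collection of these components is a bramble whose
connected order exceeds `r`. -/
theorem subK_bramble (n k : ℕ) (hn : 3 ≤ n) :
    (∀ X : Set (Fin n ⊕ ({p : Fin n × Fin n // p.1 < p.2} × Fin k)),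
      IsConnSet (subK n k) X → X.ncard ≤ (n - 1) * (k + 1) - (k + 1) / 2 →
        (∃ i : Fin n, Sum.inl i ∉ X) ∧
        ∀ i j : Fin n, Sum.inl i ∉ X → Sum.inl j ∉ X →
          ConnIn (subK n k) Xᶜ (Sum.inl i) (Sum.inl j)) ∧
    IsBramble (subK n k) (subKBramble n k ((n - 1) * (k + 1) - (k + 1) / 2)) ∧
    ∀ Y, IsConnCover (subK n k) (subKBramble n k ((n - 1) * (k + 1) - (k + 1) / 2)) Y →
      (n - 1) * (k + 1) - (k + 1) / 2 < Y.ncard := by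
  refine ⟨fun X hX hcard => ⟨SubK.exists_inl_not_mem hX hcard,
      fun i j hi hj => SubK.connIn_compl_of_isConnSet hn hX hi hj⟩, ⟨?_, ?_⟩, ?_⟩
  · rintro _ ⟨X, i, -, -, hi, rfl⟩
    exact isConnSet_setOf_connIn hi
  · rintro _ ⟨X, i, hX, hcard, hi, rfl⟩ _ ⟨X', i', hX', hcard', hi', rfl⟩
    exact (SubK.touching_of_isConnSet hn hX hX' hcard hcard' hi hi').isConnSet_union
      (isConnSet_setOf_connIn hi) (isConnSet_setOf_connIn hi')
  · rintro Y ⟨hY, hmeet⟩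
    by_contra! hcard
    obtain ⟨i, hi⟩ := SubK.exists_inl_not_mem hY hcard
    obtain ⟨y, hyY, hy⟩ := hmeet _ ⟨Y, i, hY, hcard, hi, rfl⟩
    exact hy.mem_right hyY
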